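/- arXiv:1708.08427 — 2 statements merged into one kernel-verified Lean document; each statement's English description precedes it below -/
import Mathlib

section
/- If all n beads r_1, ..., r_n lie on a common line through the origin (i.e., there exists a vector d and scalars t_i with r_i = t_i·d), then the rank of the 6×3n Z-matrix is at most 5. -/
open Matrix

def cpm (v : Fin 3 → ℝ) : Matrix (Fin 3) (Fin 3) ℝ :=
  !![0, -v 2, v 1; v 2, 0, -v 0; -v 1, v 0, 0]

def Zmat {n : ℕ} (r : Fin n → Fin 3 → ℝ) :
    Matrix (Fin 3 ⊕ Fin 3) (Fin n × Fin 3) ℝ :=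
  fun i p =>
    match i with
    | .inl a => if a = p.2 then 1 else 0
    | .inr a => cpm (r p.1) a p.2

theorem stmt2 {n : ℕ} (r : Fin n → Fin 3 → ℝ)
    (d : Fin 3 → ℝ) (t : Fin n → ℝ) (h : ∀ i, r i = t i • d) :
    (Zmat r).rank ≤ 5 := by
  obtain ⟨b, hb0, hb⟩ : ∃ b : Fin 3 → ℝ, b ≠ 0 ∧
      ∀ (k : Fin n) (j : Fin 3), ∑ a : Fin 3, cpm (r k) a j * b a = 0 := by
    by_cases hd : d = 0
    · refine ⟨![1, 0, 0], ?_, ?_⟩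
      · intro hc
        have := congrFun hc 0
        norm_num at this
      · intro k j
        have hr : r k = 0 := by rw [h k, hd, smul_zero]
        fin_cases j <;> simp [Fin.sum_univ_three, cpm, hr]
    · refine ⟨d, hd, ?_⟩
      intro k j
      have hr : r k = t k • d := h k
      fin_cases j <;>
        simp [Fin.sum_univ_three, cpm, hr, Pi.smul_apply, smul_eq_mul] <;> ring
  set w : Fin 3 ⊕ Fin 3 → ℝ := Sum.elim 0 b with hw_def
  have hw0 : w ≠ 0 := by
    intro hc
    apply hb0
    funext a
    exact congrFun hc (Sum.inr a)
  have hker : (Zmat r)ᵀ.mulVecLin w = 0 := by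
    funext p
    obtain ⟨k, j⟩ := p
    simp only [mulVecLin_apply, mulVec, dotProduct, transpose_apply, Pi.zero_apply]
    rw [Fintype.sum_sum_type]
    have h1 : ∑ a : Fin 3, Zmat r (Sum.inl a) (k, j) * w (Sum.inl a) = 0 := by
      simp [hw_def]
    have h2 : ∑ a : Fin 3, Zmat r (Sum.inr a) (k, j) * w (Sum.inr a) = 0 := by
      simpa [hw_def, Zmat] using hb k j
    rw [h1, h2, add_zero]
  have hrt : (Zmat r)ᵀ.rank ≤ 5 := by
    have hrn := LinearMap.finrank_range_add_finrank_ker ((Zmat r)ᵀ.mulVecLin)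
    have hdim : Module.finrank ℝ (Fin 3 ⊕ Fin 3 → ℝ) = 6 := by
      simp
    have hkpos : 0 < Module.finrank ℝ (LinearMap.ker (Zmat r)ᵀ.mulVecLin) := by
      rw [Module.finrank_pos_iff (R := ℝ)]
      exact nontrivial_of_ne ⟨w, hker⟩ 0 (fun hc => hw0 (by simpa using congrArg Subtype.val hc))
    have : (Zmat r)ᵀ.rank + Module.finrank ℝ (LinearMap.ker (Zmat r)ᵀ.mulVecLin) = 6 := by
      rw [Matrix.rank, hrn, hdim]
    omega
  calc (Zmat r).rank = (Zmat r)ᵀ.rank := (Matrix.rank_transpose _).symm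
    _ ≤ 5 := hrt
end

section
/- If the points r_1,...,r_n (n ≥ 3) do not all lie on a single line, then the 6×3n Z-matrix [I ... I; A_1 ... A_n] has full rank 6. -/
open Matrix

lemma cross_para {u g : Fin 3 → ℝ} (hg : g ≠ 0)
    (h0 : u 1 * g 2 - u 2 * g 1 = 0)
    (h1 : u 2 * g 0 - u 0 * g 2 = 0)
    (h2 : u 0 * g 1 - u 1 * g 0 = 0) :
    ∃ t : ℝ, u = t • g := by
  have hex : ∃ i, g i ≠ 0 := by
    by_contra hc; push_neg at hc; exact hg (funext hc)
  obtain ⟨i, hi⟩ := hex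
  fin_cases i
  · have hi' : g 0 ≠ 0 := hi
    refine ⟨u 0 / g 0, funext fun j => ?_⟩
    fin_cases j
    · show u 0 = u 0 / g 0 * g 0; field_simp
    · show u 1 = u 0 / g 0 * g 1
      rw [div_mul_eq_mul_div, eq_div_iff hi']; linarith
    · show u 2 = u 0 / g 0 * g 2
      rw [div_mul_eq_mul_div, eq_div_iff hi']; linarith
  · have hi' : g 1 ≠ 0 := hi
    refine ⟨u 1 / g 1, funext fun j => ?_⟩
    fin_cases j
    · show u 0 = u 1 / g 1 * g 0
      rw [div_mul_eq_mul_div, eq_div_iff hi']; linarith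
    · show u 1 = u 1 / g 1 * g 1; field_simp
    · show u 2 = u 1 / g 1 * g 2
      rw [div_mul_eq_mul_div, eq_div_iff hi']; linarith
  · have hi' : g 2 ≠ 0 := hi
    refine ⟨u 2 / g 2, funext fun j => ?_⟩
    fin_cases j
    · show u 0 = u 2 / g 2 * g 0
      rw [div_mul_eq_mul_div, eq_div_iff hi']; linarith
    · show u 1 = u 2 / g 2 * g 1
      rw [div_mul_eq_mul_div, eq_div_iff hi']; linarith
    · show u 2 = u 2 / g 2 * g 2; field_simp

theorem stmt3 {n : ℕ} (hn : 3 ≤ n) (r : Fin n → Fin 3 → ℝ)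
    (h : ¬ ∃ (a d : Fin 3 → ℝ), ∀ i, ∃ t : ℝ, r i = a + t • d) :
    (Zmat r).rank = 6 := by
  have hinj : Function.Injective (Zmat r)ᵀ.mulVecLin := by
    rw [injective_iff_map_eq_zero]
    intro c hc
    have hc' : ∀ p : Fin n × Fin 3, ((Zmat r)ᵀ *ᵥ c) p = 0 := by
      intro p; rw [show (Zmat r)ᵀ *ᵥ c = 0 from hc]; rfl
    -- unfold the sum
    have key : ∀ (k : Fin n) (b : Fin 3),
        c (.inl b) + ∑ a : Fin 3, cpm (r k) a b * c (.inr a) = 0 := by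
      intro k b
      have := hc' (k, b)
      simp [Matrix.mulVec, dotProduct, Fintype.sum_sum_type, Zmat,
        Fin.sum_univ_three] at this
      fin_cases b <;> simpa [Fin.sum_univ_three, cpm] using this
    set f : Fin 3 → ℝ := fun b => c (.inl b) with hf
    set g : Fin 3 → ℝ := fun a => c (.inr a) with hgdef
    have keyf : ∀ (k : Fin n) (b : Fin 3),
        f b + ∑ a : Fin 3, cpm (r k) a b * g a = 0 := key
    by_cases hg : g = 0
    · -- then f = 0, so c = 0
      have hn0 : (0 : ℕ) < n := by omega
      have hf0 : ∀ b, f b = 0 := by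
        intro b
        have := keyf ⟨0, hn0⟩ b
        simp [hg] at this
        simpa using this
      funext i
      cases i with
      | inl b => exact hf0 b
      | inr a => exact congrFun hg a
    · exfalso
      -- cross (r k - r 0) g = 0 for all k
      have hcross : ∀ k : Fin n, ∀ b, ∑ a : Fin 3, cpm (r k) a b * g a
          = ∑ a : Fin 3, cpm (r ⟨0, by omega⟩) a b * g a := by
        intro k b
        have h1 := keyf k b
        have h2 := keyf ⟨0, by omega⟩ b
        linarith
      have hpar : ∀ k : Fin n, ∃ t : ℝ, (r k - r ⟨0, by omega⟩) = t • g := by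
        intro k
        apply cross_para hg
        · have := hcross k 0
          simp [cpm, Fin.sum_univ_three] at this
          simp [Pi.sub_apply]; nlinarith [this]
        · have := hcross k 1
          simp [cpm, Fin.sum_univ_three] at this
          simp [Pi.sub_apply]; nlinarith [this]
        · have := hcross k 2
          simp [cpm, Fin.sum_univ_three] at this
          simp [Pi.sub_apply]; nlinarith [this]
      apply h
      refine ⟨r ⟨0, by omega⟩, g, fun i => ?_⟩
      obtain ⟨t, ht⟩ := hpar i
      exact ⟨t, by rw [← ht]; abel⟩
  rw [← Matrix.rank_transpose]
  have : LinearMap.range (Zmat r)ᵀ.mulVecLin ≃ₗ[ℝ] ((Fin 3 ⊕ Fin 3) → ℝ) :=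
    (LinearEquiv.ofInjective _ hinj).symm
  rw [Matrix.rank]
  rw [this.finrank_eq]
  simp [Module.finrank_pi]
end
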